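/- Let C : [0,1] → ℝ³ be C¹, regular, with Lipschitz derivative. Then there exists i₀ such that for all i ≥ i₀ and every k ∈ {1, …, 2ⁱ}, the restriction of C to the chord polygon through the points C((k−1+j/n)/2ⁱ), j = 0, …, n, is simple: the PL curve with these n+1 vertices has injective piecewise linear parametrization. -/

import Mathlib

open InnerProductGeometry

/-- Uniform piecewise linear parametrization over `[0,1]` of the PL curve with
vertices `P 0, P 1, …, P n`. -/
noncomputable def plParam (n : ℕ) (P : ℕ → EuclideanSpace ℝ (Fin 3)) (t : ℝ) :
    EuclideanSpace ℝ (Fin 3) :=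
  let j := min (n - 1) ⌊t * n⌋₊
  P j + (t * n - j) • (P (j + 1) - P j)

/-! On a dyadic cell of length `2⁻ⁱ` the velocity `C'` moves by at most `γ 2⁻ⁱ`, which is
eventually smaller than the minimal speed of `C`. By the mean value inequality every chord of `C`
over the cell then has positive inner product with the velocity `v` at the left end of the cell.
So the vertices of the chord polygon increase strictly in the direction `v`, hence so does its
piecewise linear parametrization, which is therefore injective. -/

open Set Filter
open scoped RealInnerProductSpace

noncomputable def plIndex (n : ℕ) (t : ℝ) : ℕ := min (n - 1) ⌊t * n⌋₊

noncomputable def plInterp (n : ℕ) (q : ℕ → ℝ) (t : ℝ) : ℝ :=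
  q (plIndex n t) + (t * n - plIndex n t) * (q (plIndex n t + 1) - q (plIndex n t))

section plIndex

variable {n : ℕ} {s t : ℝ}

lemma plIndex_lt (hn : 0 < n) (t : ℝ) : plIndex n t < n :=
  (min_le_left _ _).trans_lt (Nat.sub_lt hn one_pos)

lemma plIndex_le_mul (ht : 0 ≤ t) : (plIndex n t : ℝ) ≤ t * n :=
  (Nat.cast_le.mpr (min_le_right _ _)).trans (Nat.floor_le (by positivity))

lemma plIndex_mono (hst : s ≤ t) : plIndex n s ≤ plIndex n t :=
  min_le_min le_rfl (Nat.floor_le_floor (by gcongr))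

lemma mul_sub_plIndex_lt_one (h : plIndex n s < plIndex n t) : s * n - plIndex n s < 1 := by
  have hlast : plIndex n s < n - 1 := h.trans_le (min_le_left _ _)
  have hfloor : plIndex n s = ⌊s * n⌋₊ :=
    min_eq_right ((min_lt_iff.mp hlast).resolve_left (lt_irrefl _)).le
  rw [hfloor]
  linarith [Nat.lt_floor_add_one (s * n)]

end plIndex

theorem strictMonoOn_plInterp {n : ℕ} (hn : 0 < n) {q : ℕ → ℝ} (hq : StrictMonoOn q (Iic n)) :
    StrictMonoOn (plInterp n q) (Icc 0 1) := by
  intro s hs t ht hst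
  have hslope : ∀ u : ℝ, 0 < q (plIndex n u + 1) - q (plIndex n u) := fun u =>
    sub_pos.mpr (hq (mem_Iic.mpr (plIndex_lt hn u).le) (mem_Iic.mpr (plIndex_lt hn u))
      (Nat.lt_succ_self _))
  have hstn : s * n < t * n := mul_lt_mul_of_pos_right hst (by exact_mod_cast hn)
  have ht_le := plIndex_le_mul (n := n) ht.1
  rcases (plIndex_mono (n := n) hst.le).eq_or_lt with heq | hlt
  · simp only [plInterp, heq]
    nlinarith [hslope t]
  · have hs_lt : plInterp n q s < q (plIndex n s + 1) := by
      have := mul_sub_plIndex_lt_one hlt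
      simp only [plInterp]
      nlinarith [hslope s]
    have hnext : q (plIndex n s + 1) ≤ q (plIndex n t) :=
      hq.monotoneOn (mem_Iic.mpr (plIndex_lt hn s)) (mem_Iic.mpr (plIndex_lt hn t).le) hlt
    have ht_ge : q (plIndex n t) ≤ plInterp n q t := by
      simp only [plInterp]
      nlinarith [hslope t]
    linarith

lemma inner_plParam (n : ℕ) (P : ℕ → EuclideanSpace ℝ (Fin 3)) (v : EuclideanSpace ℝ (Fin 3))
    (t : ℝ) : ⟪plParam n P t, v⟫ = plInterp n (fun j => ⟪P j, v⟫) t := by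
  simp only [plParam, plInterp, plIndex, inner_add_left, real_inner_smul_left, inner_sub_left]

theorem plParam_injOn_of_inner_pos {n : ℕ} (hn : 0 < n) {P : ℕ → EuclideanSpace ℝ (Fin 3)}
    (v : EuclideanSpace ℝ (Fin 3)) (hpos : ∀ j < n, 0 < ⟪P (j + 1) - P j, v⟫) :
    InjOn (plParam n P) (Icc 0 1) := by
  have hq : StrictMonoOn (fun j => ⟪P j, v⟫) (Iic n) :=
    strictMonoOn_Iic_of_lt_succ fun j hj => by
      simpa [inner_sub_left] using hpos j hj
  have hmono := strictMonoOn_plInterp hn hq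
  intro s hs t ht hst
  exact hmono.injOn hs ht (by simp only [← inner_plParam, hst])

section Chord

variable {E : Type*} [NormedAddCommGroup E] [InnerProductSpace ℝ E]

theorem inner_sub_pos_of_norm_deriv_sub_le {C C' : ℝ → E} {a b δ : ℝ} {v : E} (hab : a < b)
    (hderiv : ∀ x ∈ Icc a b, HasDerivWithinAt C (C' x) (Icc a b) x)
    (hclose : ∀ x ∈ Ico a b, ‖C' x - v‖ ≤ δ) (hδ : δ < ‖v‖) :
    0 < ⟪C b - C a, v⟫ := by
  have hdev : ‖(C b - b • v) - (C a - a • v)‖ ≤ δ * (b - a) :=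
    norm_image_sub_le_of_norm_deriv_le_segment'
      (fun x hx => (hderiv x hx).sub ((hasDerivWithinAt_id x _).smul_const v |>.congr_deriv
        (one_smul ℝ v))) hclose b (right_mem_Icc.mpr hab.le)
  have hsplit : ⟪C b - C a, v⟫ = ⟪(C b - b • v) - (C a - a • v), v⟫ + (b - a) * ‖v‖ ^ 2 := by
    rw [← real_inner_self_eq_norm_sq, ← real_inner_smul_left, ← inner_add_left]
    congr 1
    module
  have hcs := neg_le_of_abs_le (abs_real_inner_le_norm ((C b - b • v) - (C a - a • v)) v)
  have hδ0 : 0 ≤ δ := (norm_nonneg _).trans (hclose a (left_mem_Ico.mpr hab))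
  have hgain : 0 < (b - a) * (‖v‖ * (‖v‖ - δ)) :=
    mul_pos (sub_pos.mpr hab) (mul_pos (hδ0.trans_lt hδ) (sub_pos.mpr hδ))
  rw [hsplit]
  nlinarith [mul_le_mul_of_nonneg_right hdev (norm_nonneg v)]

theorem inner_chord_pos_of_lipschitz_deriv {C C' : ℝ → E} {γ l u : ℝ}
    (hderiv : ∀ t ∈ Icc l u, HasDerivWithinAt C (C' t) (Icc l u) t)
    (hlip : ∀ t ∈ Icc l u, ‖C' t - C' l‖ ≤ γ * |t - l|) (hshort : γ * (u - l) < ‖C' l‖)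
    {a b : ℝ} (hla : l ≤ a) (hab : a < b) (hbu : b ≤ u) :
    0 < ⟪C b - C a, C' l⟫ := by
  have hsub : Icc a b ⊆ Icc l u := Icc_subset_Icc hla hbu
  refine inner_sub_pos_of_norm_deriv_sub_le hab
    (fun x hx => (hderiv x (hsub hx)).mono hsub) (fun x hx => ?_) hshort
  have hx := hsub (Ico_subset_Icc_self hx)
  have hlu : l < u := hla.trans_lt (hab.trans_le hbu)
  have hγ : 0 ≤ γ := nonneg_of_mul_nonneg_left ((norm_nonneg _).trans (hlip u ⟨hlu.le, le_rfl⟩))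
    (abs_pos.mpr (sub_ne_zero.mpr hlu.ne'))
  calc ‖C' x - C' l‖ ≤ γ * |x - l| := hlip x hx
    _ ≤ γ * (u - l) := by
      gcongr
      rw [abs_of_nonneg (sub_nonneg.mpr hx.1)]
      linarith [hx.2]

end Chord

lemma div_mem_Icc_of_le {c N : ℝ} (hN : 0 < N) {n j : ℕ} (hj : j ≤ n) :
    (c + j / n) / N ∈ Icc (c / N) ((c + 1) / N) := by
  have hjn : (j : ℝ) / n ≤ 1 := div_le_one_of_le₀ (by exact_mod_cast hj) (Nat.cast_nonneg n)
  refine ⟨?_, ?_⟩ <;> gcongr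
  exact le_add_of_nonneg_right (by positivity)

lemma Icc_div_subset_Icc_zero_one {c N : ℝ} (hN : 0 < N) (hc : 0 ≤ c) (hcN : c + 1 ≤ N) :
    Icc (c / N) ((c + 1) / N) ⊆ Icc 0 1 :=
  Icc_subset_Icc (div_nonneg hc hN.le) ((div_le_one hN).mpr hcN)

theorem stmt_14 (C C' : ℝ → EuclideanSpace ℝ (Fin 3)) (γ : ℝ)
    (hderiv : ∀ t ∈ Set.Icc (0 : ℝ) 1, HasDerivWithinAt C (C' t) (Set.Icc 0 1) t)
    (hcont : ContinuousOn C' (Set.Icc 0 1))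
    (hreg : ∀ t ∈ Set.Icc (0 : ℝ) 1, C' t ≠ 0)
    (hlip : ∀ s ∈ Set.Icc (0 : ℝ) 1, ∀ u ∈ Set.Icc (0 : ℝ) 1,
      ‖C' u - C' s‖ ≤ γ * |u - s|)
    (n : ℕ) (hn : 2 ≤ n) :
    ∃ i₀ : ℕ, ∀ i ≥ i₀, ∀ k : ℕ, 1 ≤ k → k ≤ 2 ^ i →
      Set.InjOn
        (plParam n (fun j => C (((k : ℝ) - 1 + (j : ℝ) / (n : ℝ)) / 2 ^ i)))
        (Set.Icc 0 1) := by
  obtain ⟨m, hm, hspeed⟩ := isCompact_Icc.exists_forall_le' hcont.norm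
    fun t ht => norm_pos_iff.mpr (hreg t ht)
  have hdecay : Tendsto (fun i : ℕ => γ / 2 ^ i) atTop (nhds 0) :=
    tendsto_const_nhds.div_atTop (tendsto_pow_atTop_atTop_of_one_lt one_lt_two)
  obtain ⟨i₀, hi₀⟩ := eventually_atTop.mp (hdecay.eventually (gt_mem_nhds hm))
  refine ⟨i₀, fun i hi k hk1 hk2 => ?_⟩
  have hN : (0 : ℝ) < 2 ^ i := by positivity
  set l : ℝ := ((k : ℝ) - 1) / 2 ^ i
  have hcell : Icc l (((k : ℝ) - 1 + 1) / 2 ^ i) ⊆ Icc 0 1 :=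
    Icc_div_subset_Icc_zero_one hN (sub_nonneg.mpr (by exact_mod_cast hk1))
      (by rw [sub_add_cancel]; exact_mod_cast hk2)
  have hl : l ∈ Icc 0 1 :=
    hcell (left_mem_Icc.mpr (div_le_div_of_nonneg_right (by linarith) hN.le))
  have hshort : γ * (((k : ℝ) - 1 + 1) / 2 ^ i - l) < ‖C' l‖ :=
    calc γ * (((k : ℝ) - 1 + 1) / 2 ^ i - l) = γ / 2 ^ i := by ring
      _ < m := hi₀ i hi
      _ ≤ ‖C' l‖ := hspeed l hl
  refine plParam_injOn_of_inner_pos (by omega) (C' l) fun j hj => ?_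
  refine inner_chord_pos_of_lipschitz_deriv (fun t ht => (hderiv t (hcell ht)).mono hcell)
    (fun t ht => hlip l hl t (hcell ht)) hshort
    (div_mem_Icc_of_le hN hj.le).1 ?_ (div_mem_Icc_of_le hN hj).2
  gcongr
  exact_mod_cast Nat.lt_succ_self j
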